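/- arXiv:1505.02246 — 2 statements merged into one kernel-verified Lean document; each statement's English description precedes it below -/
import Mathlib

section
/- Let G and H be connected graphs with pc(G) = pc(H) ≥ 2. Then pc(G ∘ H) ≤ pc(G), where G ∘ H is the lexicographic product. -/
open SimpleGraph

/-- An edge-coloring with `k` colors is a proper-path coloring if every pair of distinct
vertices is joined by a path in which no two consecutive (adjacent) edges share a color. -/
def IsProperPathColoring {V : Type*} (G : SimpleGraph V) {k : ℕ} (c : Sym2 V → Fin k) : Prop :=
  ∀ u v : V, u ≠ v → ∃ p : G.Walk u v, p.IsPath ∧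
    List.Chain' (fun e f => c e ≠ c f) p.edges

/-- The proper connection number: the minimum number of colors in a proper-path coloring. -/
noncomputable def pc {V : Type*} (G : SimpleGraph V) : ℕ :=
  sInf {k | ∃ c : Sym2 V → Fin k, IsProperPathColoring G c}

/-- The lexicographic product `G ∘ H`. -/
def lexProd {V W : Type*} (G : SimpleGraph V) (H : SimpleGraph W) : SimpleGraph (V × W) where
  Adj x y := G.Adj x.1 y.1 ∨ (x.1 = y.1 ∧ H.Adj x.2 y.2)
  symm := ⟨by
    rintro ⟨a, b⟩ ⟨a', b'⟩ (h | ⟨h1, h2⟩)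
    · exact Or.inl h.symm
    · exact Or.inr ⟨h1.symm, h2.symm⟩⟩
  loopless := ⟨by
    rintro ⟨a, b⟩ (h | ⟨-, h⟩)
    · exact G.irrefl h
    · exact H.irrefl h⟩

private lemma chain'_imp_mem {α : Type*} {R S : α → α → Prop} :
    ∀ {l : List α}, (∀ a ∈ l, ∀ b ∈ l, R a b → S a b) → l.Chain' R → l.Chain' S := by
  intro l
  induction l with
  | nil => simp [List.Chain']
  | cons a l ih =>
    intro h hc
    cases l with
    | nil => simp [List.Chain']
    | cons b l =>
      simp only [List.Chain', List.isChain_cons_cons] at hc ⊢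
      refine ⟨h a (by simp) b (by simp) hc.1, ih ?_ hc.2⟩
      intro x hx y hy
      exact h x (by simp [hx]) y (by simp [hy])

theorem stmt10 {V W : Type*} (G : SimpleGraph V) (H : SimpleGraph W)
    (hG : G.Connected) (hH : H.Connected) (h2 : 2 ≤ pc G) (heq : pc G = pc H) :
    pc (lexProd G H) ≤ pc G := by
  classical
  have hGne : {k | ∃ c : Sym2 V → Fin k, IsProperPathColoring G c}.Nonempty := by
    by_contra hne
    rw [Set.not_nonempty_iff_eq_empty] at hne
    have : pc G = 0 := by unfold pc; rw [hne]; simp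
    omega
  have hHne : {k | ∃ c : Sym2 W → Fin k, IsProperPathColoring H c}.Nonempty := by
    by_contra hne
    rw [Set.not_nonempty_iff_eq_empty] at hne
    have : pc H = 0 := by unfold pc; rw [hne]; simp
    omega
  obtain ⟨cG, hcG⟩ : ∃ c : Sym2 V → Fin (pc G), IsProperPathColoring G c :=
    Nat.sInf_mem hGne
  obtain ⟨cH0, hcH0⟩ : ∃ c : Sym2 W → Fin (pc H), IsProperPathColoring H c :=
    Nat.sInf_mem hHne
  set cH : Sym2 W → Fin (pc G) := fun e => Fin.cast heq.symm (cH0 e) with hcHdef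
  -- the combined coloring on the lexicographic product
  set f : V × W → V × W → Fin (pc G) :=
    fun x y => if x.1 = y.1 then cH s(x.2, y.2) else cG s(x.1, y.1) with hfdef
  have hfsymm : ∀ x y, f x y = f y x := by
    intro x y
    by_cases h : x.1 = y.1
    · rw [hfdef]
      simp only [if_pos h, if_pos h.symm]
      rw [Sym2.eq_swap]
    · rw [hfdef]
      simp only [if_neg h, if_neg (fun hh : y.1 = x.1 => h hh.symm)]
      rw [Sym2.eq_swap]
  set c : Sym2 (V × W) → Fin (pc G) := Sym2.lift ⟨f, hfsymm⟩ with hcdef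
  have hclift : ∀ x y : V × W, c s(x, y) = f x y := by
    intro x y; simp [hcdef]
  apply Nat.sInf_le
  refine ⟨c, ?_⟩
  rintro ⟨g, h⟩ ⟨g', h'⟩ huv
  by_cases hg : g = g'
  · -- same fiber: use a proper path of H inside the fiber
    subst hg
    have hh : h ≠ h' := by
      intro hhh; exact huv (by rw [hhh])
    obtain ⟨p, hp, hch⟩ := hcH0 h h' hh
    set φ : H →g lexProd G H :=
      ⟨fun b => (g, b), fun {a b} hab => Or.inr ⟨rfl, hab⟩⟩ with hφdef
    have hinj : Function.Injective φ := by
      intro a b hab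
      exact congrArg Prod.snd hab
    refine ⟨p.map φ, Walk.map_isPath_of_injective hinj hp, ?_⟩
    rw [Walk.edges_map, List.Chain', List.isChain_map]
    have key : ∀ e : Sym2 W, c (Sym2.map φ e) = cH e := by
      intro e
      induction e using Sym2.ind with
      | _ a b =>
        rw [Sym2.map_pair_eq, hclift, hfdef]
        exact if_pos rfl
    refine chain'_imp_mem (R := fun e e' => cH0 e ≠ cH0 e') ?_ hch
    intro a _ b _ hab
    rw [key, key]
    simp only [hcHdef]
    intro hcc
    exact hab (Fin.cast_injective _ hcc)
  · -- different fibers: use a proper path of G, lifted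
    obtain ⟨q, hq, hch⟩ := hcG g g' hg
    set φ : G →g lexProd G H :=
      ⟨fun x => (x, if x = g' then h' else h), fun {a b} hab => Or.inl hab⟩ with hφdef
    have hinj : Function.Injective φ := by
      intro a b hab
      exact congrArg Prod.fst hab
    have e1 : φ g = (g, h) := Prod.ext rfl (if_neg hg)
    have e2 : φ g' = (g', h') := Prod.ext rfl (if_pos rfl)
    refine ⟨(q.map φ).copy e1 e2, ?_, ?_⟩
    · rw [Walk.isPath_copy]
      exact Walk.map_isPath_of_injective hinj hq
    · rw [Walk.edges_copy, Walk.edges_map, List.Chain', List.isChain_map]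
      have key : ∀ e ∈ q.edges, c (Sym2.map φ e) = cG e := by
        intro e he
        have hadj := q.edges_subset_edgeSet he
        induction e using Sym2.ind with
        | _ a b =>
          rw [SimpleGraph.mem_edgeSet] at hadj
          have hab : a ≠ b := hadj.ne
          rw [Sym2.map_pair_eq, hclift, hfdef]
          exact if_neg hab
      refine chain'_imp_mem (R := fun e e' => cG e ≠ cG e') ?_ hch
      intro a ha b hb hab
      rw [key a ha, key b hb]
      exact hab
end

section
/- For cliques K_{m_1}, …, K_{m_n} with each m_i ≥ 2 and n ≥ 2, the n-dimensional generalized hypercube K_{m_1} □ K_{m_2} □ ⋯ □ K_{m_n} has proper connection number exactly 2. -/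
open SimpleGraph

/-- The Cartesian (box) product of a family of graphs: two tuples are adjacent iff they
differ in exactly one coordinate, where they are adjacent. -/
def boxProdFamily {ι : Type*} {V : ι → Type*} (G : ∀ i, SimpleGraph (V i)) :
    SimpleGraph (∀ i, V i) where
  Adj x y := ∃ i, (G i).Adj (x i) (y i) ∧ ∀ j, j ≠ i → x j = y j
  symm := by
    constructor; rintro x y ⟨i, hadj, heq⟩
    exact ⟨i, hadj.symm, fun j hj => (heq j hj).symm⟩
  loopless := by
    constructor; rintro x ⟨i, hadj, -⟩
    exact hadj.ne rfl

namespace Stmt18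

lemma mod_mul' (t a b : ℕ) : t % (a * b) = a * (t / a % b) + t % a := by
  conv_lhs => rw [← Nat.div_add_mod (t % (a*b)) a]
  rw [Nat.mod_mul_right_div_self, Nat.mod_mod_of_dvd t ⟨b, rfl⟩]

lemma succ_div_mod_of_lt {a b : ℕ} (h : a % b + 1 < b) :
    (a + 1) / b = a / b ∧ (a + 1) % b = a % b + 1 := by
  have hb : 0 < b := by omega
  have h0 : b * (a / b) + a % b = a := Nat.div_add_mod a b
  have h1 : a + 1 = (a % b + 1) + b * (a / b) := by omega
  constructor
  · rw [h1, Nat.add_mul_div_left _ _ hb, Nat.div_eq_of_lt h, Nat.zero_add]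
  · rw [h1, Nat.add_mul_mod_self_left, Nat.mod_eq_of_lt h]

lemma succ_div_mod_of_max {a b : ℕ} (hb : 0 < b) (h : a % b = b - 1) :
    (a + 1) / b = a / b + 1 ∧ (a + 1) % b = 0 := by
  have h0 : b * (a / b) + a % b = a := Nat.div_add_mod a b
  have h1 : a + 1 = b * (a / b) + b := by omega
  constructor
  · rw [h1, Nat.mul_add_div hb, Nat.div_self hb]
  · rw [h1, Nat.mul_add_mod, Nat.mod_self]

variable {n : ℕ}

/-- radix extended to ℕ -/
def Mx (m : Fin n → ℕ) : ℕ → ℕ := fun j => if h : j < n then m ⟨j, h⟩ else 1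

/-- partial products (weights) -/
def Wx (m : Fin n → ℕ) : ℕ → ℕ
  | 0 => 1
  | j + 1 => Wx m j * Mx m j

variable {m : Fin n → ℕ}

lemma Mx_pos (hm : ∀ i, 2 ≤ m i) (j : ℕ) : 1 ≤ Mx m j := by
  unfold Mx; split
  · exact le_trans one_le_two (hm _)
  · exact le_refl 1

lemma Mx_val (i : Fin n) : Mx m i.val = m i := by
  unfold Mx; rw [dif_pos i.isLt]

lemma Wx_pos (hm : ∀ i, 2 ≤ m i) (j : ℕ) : 1 ≤ Wx m j := by
  induction j with
  | zero => exact le_refl 1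
  | succ j ih => exact Nat.one_le_iff_ne_zero.2 (Nat.mul_ne_zero
      (Nat.one_le_iff_ne_zero.1 ih) (Nat.one_le_iff_ne_zero.1 (Mx_pos hm j)))

lemma div_Wx_succ (t j : ℕ) : t / Wx m (j + 1) = (t / Wx m j) / Mx m j := by
  rw [show Wx m (j+1) = Wx m j * Mx m j from rfl, Nat.div_div_eq_div_mul]

/-- the digit of t at position j -/
def dg (m : Fin n → ℕ) (t j : ℕ) : ℕ := (t / Wx m j) % Mx m j

lemma dg_lt_Mx (hm : ∀ i, 2 ≤ m i) (t j : ℕ) : dg m t j < Mx m j :=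
  Nat.mod_lt _ (by have := Mx_pos hm j; omega)

lemma dg_lt (hm : ∀ i, 2 ≤ m i) (t : ℕ) (i : Fin n) : dg m t i.val < m i := by
  have h := dg_lt_Mx hm t i.val
  have := Mx_val (m := m) i
  omega

/-- div/mod reconstruction for digits -/
lemma div_Wx_eq (t j : ℕ) : t / Wx m j = (t / Wx m (j+1)) * Mx m j + dg m t j := by
  have h := Nat.div_add_mod' (t / Wx m j) (Mx m j)
  rw [div_Wx_succ, dg]
  omega

/-- the Gray code -/
def gray (m : Fin n → ℕ) (hm : ∀ i, 2 ≤ m i) (t : ℕ) : ∀ i : Fin n, Fin (m i) :=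
  fun i =>
    if (t / Wx m (i.val + 1)) % 2 = 0 then ⟨dg m t i.val, dg_lt hm t i⟩
    else ⟨m i - 1 - dg m t i.val, by have := hm i; omega⟩

/-- if all digits below k are maxed, t % Wx k = Wx k - 1 -/
lemma mod_eq_of_maxed (hm : ∀ i, 2 ≤ m i) (t : ℕ) :
    ∀ k, (∀ j, j < k → dg m t j = Mx m j - 1) → t % Wx m k = Wx m k - 1 := by
  intro k
  induction k with
  | zero => intro _; simp [Wx, Nat.mod_one]
  | succ k ih =>
    intro h
    have hWk := Wx_pos hm k
    have hMk := Mx_pos hm k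
    have h1 : t % Wx m k = Wx m k - 1 := ih (fun j hj => h j (by omega))
    have h2 : dg m t k = Mx m k - 1 := h k (by omega)
    unfold dg at h2
    rw [show Wx m (k+1) = Wx m k * Mx m k from rfl, mod_mul', h1, h2]
    conv_rhs => rw [show Mx m k = (Mx m k - 1) + 1 by omega, Nat.mul_add, Nat.mul_one]
    omega

/-- Step lemma: t and t+1 differ in exactly one gray coordinate. -/
lemma gray_step (hm : ∀ i, 2 ≤ m i) (t : ℕ) (ht : t + 1 < Wx m n) :
    ∃ c : Fin n, gray m hm (t+1) c ≠ gray m hm t c ∧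
      ∀ j, j ≠ c → gray m hm (t+1) j = gray m hm t j := by
  classical
  have hex : ∃ j, dg m t j ≠ Mx m j - 1 ∧ j < n := by
    by_contra hcon
    push_neg at hcon
    have h := mod_eq_of_maxed hm t n (fun j hj => by
      by_contra hne
      exact absurd (hcon j hne) (by omega))
    rw [Nat.mod_eq_of_lt (by omega)] at h
    omega
  have hex' : ∃ j, dg m t j ≠ Mx m j - 1 := ⟨hex.choose, hex.choose_spec.1⟩
  set c := Nat.find hex' with hc
  have hcd : dg m t c ≠ Mx m c - 1 := Nat.find_spec hex'
  have hcn : c < n := lt_of_le_of_lt (Nat.find_le hex.choose_spec.1) hex.choose_spec.2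
  have hmaxed : ∀ j, j < c → dg m t j = Mx m j - 1 := by
    intro j hj
    have h2 := Nat.find_min hex' (show j < Nat.find hex' by omega)
    simpa using h2
  -- F1/F2: for i ≤ c, (t+1)/Wx i = t/Wx i + 1
  have F2 : ∀ i, i ≤ c → (t + 1) / Wx m i = t / Wx m i + 1 := fun i hi => by
    have h1 : t % Wx m i = Wx m i - 1 :=
      mod_eq_of_maxed hm t i (fun j hj => hmaxed j (by omega))
    exact (succ_div_mod_of_max (Wx_pos hm i) h1).1
  -- F3: quotients at c+1 and above unchanged
  have hdgc : dg m t c < Mx m c - 1 := by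
    have := dg_lt_Mx hm t c; omega
  have F3 : ∀ i, c < i → (t + 1) / Wx m i = t / Wx m i := by
    intro i hi
    induction i with
    | zero => omega
    | succ i ih =>
      rcases Nat.lt_or_ge c i with h' | h'
      · rw [div_Wx_succ, div_Wx_succ, ih h']
      · have hic : c = i := by omega
        rw [div_Wx_succ, div_Wx_succ, ← hic, F2 c le_rfl]
        have hdg : dg m t c = (t / Wx m c) % Mx m c := rfl
        have hx : (t / Wx m c) % Mx m c + 1 < Mx m c := by omega
        exact (succ_div_mod_of_lt hx).1
  refine ⟨⟨c, hcn⟩, ?_, ?_⟩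
  · -- coordinate c changes
    have hpar : (t + 1) / Wx m (c + 1) = t / Wx m (c + 1) := F3 (c+1) (by omega)
    have hd : dg m (t+1) c = dg m t c + 1 := by
      unfold dg
      rw [F2 c le_rfl]
      have : (t / Wx m c) % Mx m c + 1 < Mx m c := by unfold dg at hdgc; omega
      exact (succ_div_mod_of_lt this).2
    unfold gray
    simp only [hpar]
    have hMc : Mx m c = m ⟨c, hcn⟩ := Mx_val ⟨c, hcn⟩
    have hlt := dg_lt_Mx hm t c
    split
    · intro hcon
      have := congrArg Fin.val hcon
      simp only at this
      omega
    · intro hcon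
      have := congrArg Fin.val hcon
      simp only at this
      omega
  · -- other coordinates unchanged
    rintro ⟨j, hjn⟩ hne
    have hjc : j ≠ c := by
      intro h; apply hne; exact Fin.ext h
    rcases Nat.lt_or_ge c j with h' | h'
    · -- j > c : everything unchanged
      unfold gray dg
      apply Fin.ext
      rw [apply_ite Fin.val, apply_ite Fin.val]
      dsimp only
      rw [F3 j h', F3 (j+1) (by omega)]
    · -- j < c
      have hjc' : j < c := by omega
      have hq : (t + 1) / Wx m (j + 1) = t / Wx m (j + 1) + 1 := F2 (j+1) (by omega)
      have hdj : dg m t j = Mx m j - 1 := hmaxed j hjc'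
      have hdj' : dg m (t+1) j = 0 := by
        unfold dg
        rw [F2 j (by omega)]
        have h1 : (t / Wx m j) % Mx m j = Mx m j - 1 := hdj
        exact (succ_div_mod_of_max (Mx_pos hm j) h1).2
      have hMj : Mx m j = m ⟨j, hjn⟩ := Mx_val ⟨j, hjn⟩
      have hm2 : 2 ≤ m ⟨j, hjn⟩ := hm _
      unfold gray
      simp only [hq, hdj', hdj]
      rcases Nat.even_or_odd (t / Wx m (j+1)) with he | ho
      · have h1 : t / Wx m (j+1) % 2 = 0 := Nat.even_iff.1 he
        have h2 : (t / Wx m (j+1) + 1) % 2 = 1 := by omega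
        apply Fin.ext
        rw [apply_ite Fin.val, apply_ite Fin.val, if_pos h1, if_neg (show ¬ (t / Wx m (j+1) + 1) % 2 = 0 by omega)]
        simp only
        omega
      · have h1 : t / Wx m (j+1) % 2 = 1 := Nat.odd_iff.1 ho
        have h2 : (t / Wx m (j+1) + 1) % 2 = 0 := by omega
        apply Fin.ext
        rw [apply_ite Fin.val, apply_ite Fin.val, if_neg (show ¬ t / Wx m (j+1) % 2 = 0 by omega), if_pos h2]
        simp only
        omega

lemma gray_inj (hm : ∀ i, 2 ≤ m i) {t t' : ℕ} (ht : t < Wx m n) (ht' : t' < Wx m n)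
    (h : gray m hm t = gray m hm t') : t = t' := by
  have key : ∀ k, k ≤ n → t / Wx m (n - k) = t' / Wx m (n - k) := by
    intro k
    induction k with
    | zero =>
      intro _
      simp only [Nat.sub_zero]
      rw [Nat.div_eq_of_lt ht, Nat.div_eq_of_lt ht']
    | succ k ih =>
      intro hk
      have hi : n - (k+1) < n := by omega
      set i : ℕ := n - (k+1) with hidef
      have hsucc : i + 1 = n - k := by omega
      have hq : t / Wx m (i+1) = t' / Wx m (i+1) := by rw [hsucc]; exact ih (by omega)
      have hgi : gray m hm t ⟨i, hi⟩ = gray m hm t' ⟨i, hi⟩ := congrFun h _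
      have hMi : Mx m i = m ⟨i, hi⟩ := Mx_val ⟨i, hi⟩
      have hd : dg m t i = dg m t' i := by
        unfold gray at hgi
        dsimp only at hgi
        rw [hq] at hgi
        have hlt := dg_lt_Mx hm t i
        have hlt' := dg_lt_Mx hm t' i
        split at hgi
        · exact congrArg Fin.val hgi
        · have := congrArg Fin.val hgi
          dsimp only at this
          omega
      rw [div_Wx_eq t i, div_Wx_eq t' i, hq, hd]
  have h0 := key n le_rfl
  simpa [Wx] using h0

lemma Wx_eq_prod : Wx m n = ∏ i : Fin n, m i := by
  have h : ∀ k, Wx m k = ∏ j ∈ Finset.range k, Mx m j := by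
    intro k
    induction k with
    | zero => simp [Wx]
    | succ k ih => rw [show Wx m (k+1) = Wx m k * Mx m k from rfl, ih,
        Finset.prod_range_succ]
  rw [h n, ← Fin.prod_univ_eq_prod_range (fun j => Mx m j) n]
  exact Finset.prod_congr rfl (fun i _ => Mx_val i)

lemma gray_surj (hm : ∀ i, 2 ≤ m i) (u : ∀ i : Fin n, Fin (m i)) :
    ∃ t, t < Wx m n ∧ gray m hm t = u := by
  classical
  have hcard : Fintype.card (∀ i : Fin n, Fin (m i)) = Wx m n := by
    rw [Wx_eq_prod]
    simp [Fintype.card_pi]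
  let f : Fin (Wx m n) → (∀ i : Fin n, Fin (m i)) := fun t => gray m hm t.val
  have hinj : Function.Injective f := by
    intro a b hab
    exact Fin.ext (gray_inj hm a.isLt b.isLt hab)
  have hbij : Function.Bijective f :=
    (Fintype.bijective_iff_injective_and_card f).2 ⟨hinj, by simp [hcard]⟩
  obtain ⟨t, htu⟩ := hbij.2 u
  exact ⟨t.val, t.isLt, htu⟩

variable (m) in
/-- The graph -/
abbrev GG : SimpleGraph (∀ i : Fin n, Fin (m i)) := boxProdFamily (fun i => (⊤ : SimpleGraph (Fin (m i))))

lemma gray_adj (hm : ∀ i, 2 ≤ m i) (t : ℕ) (ht : t + 1 < Wx m n) :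
    (GG m).Adj (gray m hm t) (gray m hm (t+1)) := by
  obtain ⟨c, hne, heq⟩ := gray_step hm t ht
  exact ⟨c, by simp [hne.symm], fun j hj => (heq j hj).symm⟩

noncomputable def walkFrom (hm : ∀ i, 2 ≤ m i) (a : ℕ) :
    (k : ℕ) → (h : a + k < Wx m n) → (GG m).Walk (gray m hm a) (gray m hm (a+k))
  | 0, _ => Walk.nil
  | k+1, h => (walkFrom hm a k (by omega)).concat (gray_adj hm (a+k) h)

lemma walkFrom_zero (hm : ∀ i, 2 ≤ m i) (a : ℕ) (h : a + 0 < Wx m n) :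
    walkFrom hm a 0 h = Walk.nil := rfl

lemma walkFrom_succ (hm : ∀ i, 2 ≤ m i) (a k : ℕ) (h : a + (k+1) < Wx m n) :
    walkFrom hm a (k+1) h = (walkFrom hm a k (by omega)).concat (gray_adj hm (a+k) h) := rfl

lemma edges_walkFrom (hm : ∀ i, 2 ≤ m i) (a : ℕ) :
    ∀ (k : ℕ) (h : a + k < Wx m n), (walkFrom hm a k h).edges =
      (List.range k).map (fun i => s(gray m hm (a+i), gray m hm (a+i+1))) := by
  intro k
  induction k with
  | zero => intro h; rw [walkFrom_zero]; rfl
  | succ k ih =>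
    intro h
    rw [walkFrom_succ, Walk.edges_concat, ih (by omega), List.range_succ, List.map_append,
      List.concat_eq_append]
    rfl

lemma support_walkFrom (hm : ∀ i, 2 ≤ m i) (a : ℕ) :
    ∀ (k : ℕ) (h : a + k < Wx m n), (walkFrom hm a k h).support =
      (List.range (k+1)).map (fun i => gray m hm (a+i)) := by
  intro k
  induction k with
  | zero => intro h; rw [walkFrom_zero]; rfl
  | succ k ih =>
    intro h
    rw [walkFrom_succ, Walk.support_concat, ih (by omega), List.range_succ (n := k+1),
      List.map_append]
    rfl

lemma isPath_walkFrom (hm : ∀ i, 2 ≤ m i) (a k : ℕ) (h : a + k < Wx m n) :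
    (walkFrom hm a k h).IsPath := by
  rw [Walk.isPath_def, support_walkFrom]
  apply List.Nodup.map_on
  · intro x hx y hy hxy
    rw [List.mem_range] at hx hy
    have := gray_inj hm (t := a + x) (t' := a + y) (by omega) (by omega) hxy
    omega
  · exact List.nodup_range

open scoped Classical in
noncomputable def col (m : Fin n → ℕ) (hm : ∀ i, 2 ≤ m i) :
    Sym2 (∀ i : Fin n, Fin (m i)) → Fin 2 := fun e =>
  if h : ∃ t, t + 1 < Wx m n ∧ e = s(gray m hm t, gray m hm (t+1)) then
    ⟨h.choose % 2, Nat.mod_lt _ two_pos⟩ else 0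

lemma col_eq (hm : ∀ i, 2 ≤ m i) (t : ℕ) (ht : t + 1 < Wx m n) :
    col m hm s(gray m hm t, gray m hm (t+1)) = ⟨t % 2, Nat.mod_lt _ two_pos⟩ := by
  have hex : ∃ t', t' + 1 < Wx m n ∧
      (s(gray m hm t, gray m hm (t+1)) : Sym2 _) = s(gray m hm t', gray m hm (t'+1)) :=
    ⟨t, ht, rfl⟩
  simp only [col]
  rw [dif_pos hex]
  obtain ⟨ht', heq⟩ := hex.choose_spec
  set t' := hex.choose with ht'def
  rw [Sym2.eq_iff] at heq
  have htt : t = t' := by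
    rcases heq with ⟨h1, h2⟩ | ⟨h1, h2⟩
    · exact gray_inj hm (by omega) (by omega) h1
    · have e1 : t = t' + 1 := gray_inj hm (by omega) (by omega) h1
      have e2 : t + 1 = t' := gray_inj hm (by omega) (by omega) h2
      omega
  apply Fin.ext
  simp only
  rw [← ht'def, htt]

lemma chain_walkFrom (hm : ∀ i, 2 ≤ m i) (a k : ℕ) (h : a + k < Wx m n) :
    List.Chain' (fun e f => col m hm e ≠ col m hm f) (walkFrom hm a k h).edges := by
  unfold List.Chain'
  rw [edges_walkFrom, List.isChain_map]
  rcases k with _ | k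
  · simp
  · rw [List.isChain_range_succ]
    intro i hik
    simp only [Nat.succ_eq_add_one, ← Nat.add_assoc]
    rw [col_eq hm (a+i) (by omega), col_eq hm (a+i+1) (by omega)]
    intro hcon
    have := congrArg Fin.val hcon
    simp only at this
    omega

/-- The 2-coloring is a proper path coloring -/
lemma col_proper (hm : ∀ i, 2 ≤ m i) : IsProperPathColoring (GG m) (col m hm) := by
  intro u v huv
  obtain ⟨a, ha, rfl⟩ := gray_surj hm u
  obtain ⟨b, hb, rfl⟩ := gray_surj hm v
  have key : ∀ (a b : ℕ), a < b → b < Wx m n →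
      ∃ p : (GG m).Walk (gray m hm a) (gray m hm b), p.IsPath ∧
        List.Chain' (fun e f => col m hm e ≠ col m hm f) p.edges := by
    intro a b hab hbN
    have hE : b = a + (b - a) := by omega
    rw [hE]
    exact ⟨walkFrom hm a (b-a) (by omega), isPath_walkFrom hm a (b-a) (by omega),
      chain_walkFrom hm a (b-a) (by omega)⟩
  rcases lt_trichotomy a b with hab | hab | hab
  · exact key a b hab hb
  · exact absurd (by rw [hab]) huv
  · obtain ⟨p, hp, hchain⟩ := key b a hab ha
    refine ⟨p.reverse, hp.reverse, ?_⟩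
    unfold List.Chain'
    rw [Walk.edges_reverse, List.isChain_reverse]
    exact List.IsChain.imp (fun _ _ h => Ne.symm h) hchain

end Stmt18

open Stmt18 in
theorem stmt18 (n : ℕ) (hn : 2 ≤ n) (m : Fin n → ℕ) (hm : ∀ i, 2 ≤ m i) :
    pc (boxProdFamily (fun i => (⊤ : SimpleGraph (Fin (m i))))) = 2 := by
  classical
  have h2mem : 2 ∈ {k | ∃ c : Sym2 (∀ i : Fin n, Fin (m i)) → Fin k,
      IsProperPathColoring (GG m) c} := ⟨col m hm, col_proper hm⟩
  apply le_antisymm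
  · exact Nat.sInf_le h2mem
  · apply le_csInf ⟨2, h2mem⟩
    rintro k ⟨c, hc⟩
    by_contra hlt
    push_neg at hlt
    -- define the two witness vertices
    set u : ∀ i : Fin n, Fin (m i) := fun i => ⟨0, by have := hm i; omega⟩ with hu
    set v : ∀ i : Fin n, Fin (m i) :=
      fun i => if i.val ≤ 1 then ⟨1, by have := hm i; omega⟩ else ⟨0, by have := hm i; omega⟩
      with hv
    have hdiff : ∀ j : Fin n, j.val ≤ 1 → u j ≠ v j := by
      intro j hj hcon
      rw [hu, hv] at hcon
      simp only [if_pos hj] at hcon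
      have h01 := congrArg Fin.val hcon
      simp only at h01
      omega
    have i0 : Fin n := ⟨0, by omega⟩
    interval_cases k
    · exact (c s(u, u)).elim0
    · have hne : u ≠ v := fun h => hdiff ⟨0, by omega⟩ (by simp) (congrFun h _)
      obtain ⟨p, hp, hchain⟩ := hc u v hne
      rcases hl : p.length with _ | _ | l
      · exact hne (Walk.eq_of_length_eq_zero hl)
      · obtain ⟨i, hadj, heq⟩ := Walk.adj_of_length_eq_one hl
        have e0 : i = ⟨0, by omega⟩ := by
          by_contra hx
          exact hdiff ⟨0, by omega⟩ (by simp) (heq _ (fun hh => hx hh.symm))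
        have e1 : i = ⟨1, by omega⟩ := by
          by_contra hx
          exact hdiff ⟨1, by omega⟩ (by simp) (heq _ (fun hh => hx hh.symm))
        rw [e0] at e1
        exact absurd (congrArg Fin.val e1) (by simp)
      · have hlen : p.edges.length = l + 2 := by rw [Walk.length_edges, hl]
        rcases he : p.edges with _ | ⟨e0, _ | ⟨e1, rest⟩⟩ <;> rw [he] at hlen <;>
          simp only [List.length_nil, List.length_cons] at hlen
        · omega
        · omega
        · rw [he] at hchain
          exact (List.isChain_cons_cons.mp hchain).1 (Subsingleton.elim _ _)
end
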